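/- arXiv:1005.2016 — 8 statements merged into one kernel-verified Lean document; each statement's English description precedes it below -/
import Mathlib

section
/- Let p be a prime, P a subgroup of order p in the symmetric group S_p, and N the normalizer of P in S_p. Then the map N/P → (Z/pZ)^× induced by conjugation action on P is a group isomorphism; in particular there is a split short exact sequence 1 → P → N → (Z/pZ)^× → 1. -/
/-!
A subgroup of order `p` in `S_p` is generated by a `p`-cycle `σ`, and the conjugation map
`N → Aut ⟨σ⟩ ≃ (ZMod p)ˣ` has kernel the centralizer of `σ`, which is `⟨σ⟩` because `σ` moves
every point. It is onto because for `a` prime to `p` the power `σ ^ a` is again a `p`-cycle,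
hence conjugate to `σ`. The extension splits by Schur–Zassenhaus, as `p` is prime to `p - 1`.
-/
open Equiv Equiv.Perm Subgroup

theorem IsCyclic.mulAut_apply_eq_pow_val {G : Type*} [Group G] [Finite G] [hG : IsCyclic G]
    (α : MulAut G) (x : G) :
    α x = x ^ (IsCyclic.mulAutMulEquiv G α : ZMod (Nat.card G)).val := by
  set ψ := zmodCyclicMulEquiv hG
  set g := ψ (Multiplicative.ofAdd 1)
  have hψ (z : ZMod (Nat.card G)) : ψ (Multiplicative.ofAdd z) = g ^ z.val := by
    rw [← map_pow, ← ofAdd_nsmul, nsmul_one, ZMod.natCast_zmod_val]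
  have hαg : α g = g ^ (IsCyclic.mulAutMulEquiv G α : ZMod (Nat.card G)).val := by
    rw [← hψ]; exact (ψ.apply_symm_apply (α g)).symm
  obtain ⟨y, rfl⟩ := ψ.surjective x
  rw [← ofAdd_toAdd y, hψ, map_pow, hαg, pow_right_comm]

theorem IsCyclic.exists_mulAut_mulEquiv_units_of_card_eq {G : Type*} [Group G] [Finite G]
    [IsCyclic G] {n : ℕ} (hn : Nat.card G = n) :
    ∃ e : MulAut G ≃* (ZMod n)ˣ, ∀ α x, α x = x ^ (e α : ZMod n).val := by
  subst hn
  exact ⟨_, IsCyclic.mulAut_apply_eq_pow_val⟩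

theorem pow_zmod_val_injective {M : Type*} [LeftCancelMonoid M] {x : M} {n : ℕ} [NeZero n]
    (hx : orderOf x = n) : Function.Injective fun a : ZMod n ↦ x ^ a.val := by
  intro a b (hab : x ^ a.val = x ^ b.val)
  have hmod : a.val ≡ b.val [MOD n] := by
    have := pow_eq_pow_iff_modEq.mp hab
    rwa [hx] at this
  have hcast := (ZMod.natCast_eq_natCast_iff _ _ _).mpr hmod
  rwa [ZMod.natCast_zmod_val, ZMod.natCast_zmod_val] at hcast

theorem Subgroup.mem_normalizer_zpowers_of_conj_mem {G : Type*} [Group G] [Finite G] {g c : G}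
    (h : g * c * g⁻¹ ∈ zpowers c) : g ∈ normalizer (zpowers c : Set G) := by
  refine mem_normalizer_fintype fun x hx ↦ ?_
  obtain ⟨k, rfl⟩ := mem_zpowers_iff.mp hx
  rw [← MulAut.conj_apply, map_zpow, MulAut.conj_apply]
  exact zpow_mem h k

theorem MonoidHom.exists_rightInverse_of_coprime {G H : Type*} [Group G] [Group H] [Finite G]
    (f : G →* H) (hf : Function.Surjective f) (hcop : (Nat.card f.ker).Coprime (Nat.card H)) :
    ∃ s : H →* G, f.comp s = MonoidHom.id H := by
  have hindex : f.ker.index = Nat.card H := by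
    rw [index_ker, range_eq_top.mpr hf, card_top]
  obtain ⟨K, hK⟩ := exists_right_complement'_of_coprime (hindex ▸ hcop)
  let e := (QuotientGroup.quotientKerEquivOfSurjective f hf).symm.trans hK.symm.QuotientMulEquiv
  refine ⟨K.subtype.comp e.toMonoidHom, MonoidHom.ext fun u ↦ ?_⟩
  -- `e u` is the representative in `K` of the coset of `ker f` lying over `u`.
  calc f (e u)
      = QuotientGroup.quotientKerEquivOfSurjective f hf (hK.symm.QuotientMulEquiv.symm (e u)) := rfl
    _ = u := by simp [e]

namespace Equiv.Perm

variable {α : Type*} [Fintype α] [DecidableEq α]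

theorem IsCycle.isConj_pow {c : Perm α} (hc : c.IsCycle) {n : ℕ} (hn : n.Coprime (orderOf c)) :
    IsConj c (c ^ n) :=
  hc.isConj (hc.pow_iff.mpr hn) (by rw [support_pow_coprime hn])

theorem IsCycle.exists_mem_normalizer_conj_eq_pow {c : Perm α} (hc : c.IsCycle) {n : ℕ}
    (hn : orderOf c = n) (u : (ZMod n)ˣ) :
    ∃ η ∈ normalizer (zpowers c : Set (Perm α)), η * c * η⁻¹ = c ^ (u : ZMod n).val := by
  have hcop : (u : ZMod n).val.Coprime (orderOf c) := hn ▸ ZMod.val_coe_unit_coprime u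
  obtain ⟨η, hη⟩ := _root_.isConj_iff.mp (hc.isConj_pow hcop)
  exact ⟨η, mem_normalizer_zpowers_of_conj_mem (hη ▸ npow_mem_zpowers c _), hη⟩

theorem IsCycle.centralizer_zpowers {c : Perm α} (hc : c.IsCycle)
    (hsupp : c.support = Finset.univ) :
    centralizer (zpowers c : Set (Perm α)) = zpowers c := by
  refine le_antisymm (fun g hg ↦ ?_) (le_centralizer _)
  obtain ⟨hg', hmem⟩ := hc.commute_iff.mp (mem_centralizer_iff.mp hg c (mem_zpowers c)).symm
  rwa [ofSubtype_subtypePerm hg' fun x _ ↦ hsupp ▸ Finset.mem_univ x] at hmem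

theorem exists_isCycle_zpowers_eq_of_card_eq {p : ℕ} [Fact p.Prime] (hα : Fintype.card α = p)
    {P : Subgroup (Perm α)} (hP : Nat.card P = p) :
    ∃ σ : Perm α, σ.IsCycle ∧ σ.support = Finset.univ ∧ orderOf σ = p ∧ zpowers σ = P := by
  have : Nontrivial P := Finite.one_lt_card_iff_nontrivial.mp (hP ▸ Fact.out (p := p.Prime).one_lt)
  obtain ⟨g, hg⟩ := exists_ne (1 : P)
  have hord : orderOf (g : Perm α) = p := by
    rw [orderOf_coe]
    exact orderOf_eq_prime (hP ▸ pow_card_eq_one') hg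
  have hcyc : (g : Perm α).IsCycle := isCycle_of_prime_order'' (hα ▸ Fact.out) (hα ▸ hord)
  refine ⟨g, hcyc, Finset.eq_univ_of_card _ (by rw [← hcyc.orderOf, hord, hα]), hord, ?_⟩
  exact eq_of_le_of_card_ge (zpowers_le.mpr g.2) (by rw [hP, Nat.card_zpowers, hord])

end Equiv.Perm

/-- For a prime `p`, a subgroup `P` of order `p` in `S_p`, and `N` its
normalizer, the conjugation action induces an isomorphism `N/P ≃ (ZMod p)ˣ`; the
short exact sequence `1 → P → N → (ZMod p)ˣ → 1` is split.  We encode the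
isomorphism `N/P ≃ (ZMod p)ˣ` as a surjective homomorphism `φ : N →* (ZMod p)ˣ`
with kernel `P`, induced by conjugation, together with a section. -/
theorem stmt_0 (p : ℕ) (hp : p.Prime) (P : Subgroup (Equiv.Perm (Fin p)))
    (hP : Nat.card P = p) :
    ∃ φ : ↥(Subgroup.normalizer (P : Set (Equiv.Perm (Fin p)))) →* (ZMod p)ˣ,
      Function.Surjective φ ∧
      φ.ker = P.subgroupOf (Subgroup.normalizer (P : Set (Equiv.Perm (Fin p)))) ∧
      (∀ η : ↥(Subgroup.normalizer (P : Set (Equiv.Perm (Fin p)))), ∀ σ ∈ P,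
        (η : Equiv.Perm (Fin p)) * σ * (η : Equiv.Perm (Fin p))⁻¹
          = σ ^ ((φ η : ZMod p).val)) ∧
      ∃ s : (ZMod p)ˣ →* ↥(Subgroup.normalizer (P : Set (Equiv.Perm (Fin p)))), φ.comp s = MonoidHom.id (ZMod p)ˣ := by
  have : Fact p.Prime := ⟨hp⟩
  obtain ⟨σ, hσ, hsupp, hord, rfl⟩ := exists_isCycle_zpowers_eq_of_card_eq (Fintype.card_fin p) hP
  obtain ⟨e, he⟩ := IsCyclic.exists_mulAut_mulEquiv_units_of_card_eq hP
  set φ := (e : MulAut (zpowers σ) →* (ZMod p)ˣ).comp (zpowers σ).normalizerMonoidHom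
  have hconj (η : normalizer (zpowers σ : Set (Perm (Fin p)))) (τ : Perm (Fin p))
      (hτ : τ ∈ zpowers σ) :
      (η : Perm (Fin p)) * τ * (η : Perm (Fin p))⁻¹ = τ ^ (φ η : ZMod p).val :=
    congrArg Subtype.val (he ((zpowers σ).normalizerMonoidHom η) ⟨τ, hτ⟩)
  have hsurj : Function.Surjective φ := fun u ↦ by
    obtain ⟨η, hη, hησ⟩ := hσ.exists_mem_normalizer_conj_eq_pow hord u
    exact ⟨⟨η, hη⟩, Units.ext <| pow_zmod_val_injective hord <|
      (hconj ⟨η, hη⟩ σ (mem_zpowers σ)).symm.trans hησ⟩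
  have hker : φ.ker = (zpowers σ).subgroupOf (normalizer (zpowers σ : Set (Perm (Fin p)))) := by
    rw [MonoidHom.ker_mulEquiv_comp, normalizerMonoidHom_ker, hσ.centralizer_zpowers hsupp]
  have hcop : (Nat.card φ.ker).Coprime (Nat.card (ZMod p)ˣ) := by
    rw [hker, Nat.card_congr (subgroupOfEquivOfLe le_normalizer).toEquiv, hP,
      Nat.card_eq_fintype_card, ZMod.card_units]
    exact (Nat.coprime_self_sub_right hp.one_le).mpr (Nat.coprime_one_right p)
  exact ⟨φ, hsurj, hker, hconj, φ.exists_rightInverse_of_coprime hsurj hcop⟩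
end

section
/- Let p be a prime and Γ a transitive subgroup of the symmetric group S_p. Then Γ is solvable if and only if Γ contains a unique Sylow p-subgroup (which then has order p). -/
/-!
A nontrivial normal subgroup of a transitive group of prime degree `p` is again transitive, since
its orbits form a block system. A transitive subgroup `N` with `N ≤ C(N)` acts regularly, so it
has order `p` and equals its own centralizer. As `p² ∤ p!` while `p` divides the order of a
transitive group, every Sylow `p`-subgroup has order `p`.

If `Γ` is solvable, the last nontrivial term of its derived series is abelian and normal, hence
a normal subgroup of order `p`; it is then the only Sylow `p`-subgroup. Conversely, a unique
Sylow `p`-subgroup `P` is normal and cyclic, and `Γ / C(P) = Γ / P` embeds into the abelian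
group `Aut P`, so `Γ` is solvable.
-/

open MulAction Subgroup Nat

theorem Nat.Prime.pow_dvd_self_of_pow_dvd_factorial {p k : ℕ} (hp : p.Prime) (h : p ^ k ∣ p !) :
    p ^ k ∣ p := by
  have hcop : (p ^ k).Coprime (p - 1)! :=
    Nat.Coprime.pow_left k <| (hp.coprime_iff_not_dvd).mpr fun hdvd ↦ by
      have := hp.dvd_factorial.mp hdvd
      have := hp.pos
      omega
  rw [← Nat.mul_factorial_pred hp.ne_zero] at h
  exact hcop.dvd_of_dvd_mul_right h

theorem Group.IsSolvable.exists_normal_le_centralizer_ne_bot (G : Type*) [Group G]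
    [Group.IsSolvable G] [Nontrivial G] :
    ∃ A : Subgroup G, A.Normal ∧ A ≤ centralizer (A : Set G) ∧ A ≠ ⊥ := by
  classical
  have hsol := IsSolvable.solvable (G := G)
  obtain ⟨m, hm⟩ := Nat.exists_eq_succ_of_ne_zero (n := Nat.find hsol) fun h ↦ by
    simpa [h] using Nat.find_spec hsol
  refine ⟨derivedSeries G m, derivedSeries_normal G m, ?_, Nat.find_min hsol (by omega)⟩
  rw [← commutator_eq_bot_iff_le_centralizer, ← derivedSeries_succ, ← Nat.succ_eq_add_one, ← hm]
  exact Nat.find_spec hsol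

theorem IsCyclic.isSolvable_mulAut (G : Type*) [Group G] [IsCyclic G] :
    Group.IsSolvable (MulAut G) :=
  Group.isSolvable_of_isSolvable_injective (f := (IsCyclic.mulAutMulEquiv G).toMonoidHom)
    (IsCyclic.mulAutMulEquiv G).injective

theorem Group.isSolvable_of_centralizer_le {G : Type*} [Group G] {N : Subgroup G} [N.Normal]
    [Group.IsSolvable N] [Group.IsSolvable (MulAut N)] (h : centralizer (N : Set G) ≤ N) :
    Group.IsSolvable G := by
  refine Group.isSolvable_of_ker_le_range N.subtype (MulAut.conjNormal (H := N)) fun g hg ↦ ?_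
  rw [range_subtype]
  refine h (mem_centralizer_iff.mpr fun n hn ↦ ?_)
  have hconj := congrArg Subtype.val (DFunLike.congr_fun (MonoidHom.mem_ker.mp hg) ⟨n, hn⟩)
  simp only [MulAut.conjNormal_apply, MulAut.one_apply] at hconj
  exact (eq_mul_of_mul_inv_eq hconj).symm

namespace MulAction

variable {G X : Type*} [Group G] [MulAction G X] [FaithfulSMul G X]

section

variable {N : Subgroup G} [IsPretransitive N X]

theorem eq_one_of_mem_centralizer_of_smul_eq {c : G}
    (hc : c ∈ centralizer (N : Set G)) {x : X} (hx : c • x = x) : c = 1 :=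
  eq_of_smul_eq_smul fun y ↦ by
    obtain ⟨n, rfl⟩ := exists_smul_eq N x y
    rw [one_smul, Subgroup.smul_def, ← mul_smul, ← mem_centralizer_iff.mp hc n n.2, mul_smul, hx]

theorem centralizer_le_of_le_centralizer [Nonempty X] (hN : N ≤ centralizer (N : Set G)) :
    centralizer (N : Set G) ≤ N := by
  intro c hc
  obtain ⟨x⟩ : Nonempty X := inferInstance
  obtain ⟨n, hn⟩ := exists_smul_eq N x (c • x)
  have : (n : G)⁻¹ * c = 1 :=
    eq_one_of_mem_centralizer_of_smul_eq (mul_mem (inv_mem (hN n.2)) hc)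
      (x := x) (by rw [mul_smul, ← hn, Subgroup.smul_def, inv_smul_smul])
  exact inv_mul_eq_one.mp this ▸ n.2

theorem card_eq_of_le_centralizer [Nonempty X] (hN : N ≤ centralizer (N : Set G)) :
    Nat.card N = Nat.card X := by
  obtain ⟨x⟩ : Nonempty X := inferInstance
  refine Nat.card_eq_of_bijective (fun n : N ↦ n • x) ⟨fun m n hmn ↦ ?_, exists_smul_eq N x⟩
  have : (n : G)⁻¹ * m = 1 :=
    eq_one_of_mem_centralizer_of_smul_eq (hN (mul_mem (inv_mem n.2) m.2))
      (x := x) (by rw [mul_smul]; exact inv_smul_eq_iff.mpr hmn)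
  exact Subtype.ext (inv_mul_eq_one.mp this).symm

end

variable [IsPretransitive G X]

theorem isPretransitive_of_normal_of_prime_card (hX : (Nat.card X).Prime) {N : Subgroup G}
    [N.Normal] (hN : N ≠ ⊥) :
    IsPretransitive N X := by
  have := IsPreprimitive.of_prime_card (G := G) hX
  refine IsQuasiPreprimitive.isPretransitive_of_normal fun hfix ↦ hN ?_
  refine eq_bot_iff.mpr fun n hn ↦ mem_bot.mpr <| eq_of_smul_eq_smul (α := X) fun x ↦ ?_
  rw [one_smul]
  exact Set.eq_univ_iff_forall.mp hfix x ⟨n, hn⟩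

variable {p : ℕ} [Fact p.Prime]

theorem card_sylow_eq_of_card_eq_prime [Finite G] (hX : Nat.card X = p) (P : Sylow p G) :
    Nat.card P = p := by
  have hp : p.Prime := Fact.out
  have : Finite X := Nat.finite_of_card_ne_zero (hX ▸ hp.ne_zero)
  have hdvd : p ∣ Nat.card G := by
    obtain ⟨x⟩ : Nonempty X := (Nat.card_pos_iff.mp (hX ▸ hp.pos)).1
    rw [← hX, ← index_stabilizer_of_transitive G x]
    exact index_dvd_card _
  have hG : Nat.card G ∣ p ! := hX ▸ Nat.card_perm (α := X) ▸
    card_dvd_of_injective (toPermHom G X) (toPerm_injective (α := G) (β := X))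
  obtain ⟨k, hk⟩ := P.isPGroup'.exists_card_eq
  refine Nat.dvd_antisymm ?_ (P.dvd_card_of_dvd_card hdvd)
  rw [hk]
  exact hp.pow_dvd_self_of_pow_dvd_factorial (hk ▸ (card_subgroup_dvd_card _).trans hG)

theorem isSolvable_iff_subsingleton_sylow [Finite G] (hX : Nat.card X = p) :
    Group.IsSolvable G ↔ Subsingleton (Sylow p G) := by
  have hp : p.Prime := Fact.out
  have hXp : (Nat.card X).Prime := hX ▸ hp
  have : Nonempty X := (Nat.card_pos_iff.mp hXp.pos).1
  obtain ⟨P⟩ : Nonempty (Sylow p G) := inferInstance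
  have hP : Nat.card P = p := card_sylow_eq_of_card_eq_prime hX P
  have : Nontrivial P := Finite.one_lt_card_iff_nontrivial.mp (hP.symm ▸ hp.one_lt)
  have hP1 : (P : Subgroup G) ≠ ⊥ := (nontrivial_iff_ne_bot _).mp this
  constructor
  · intro hsol
    have : Nontrivial G := (Subtype.val_injective (p := (· ∈ (P : Subgroup G)))).nontrivial
    obtain ⟨A, hA, hAA, hA1⟩ := hsol.exists_normal_le_centralizer_ne_bot G
    have := isPretransitive_of_normal_of_prime_card hXp hA1
    have hAcard : Nat.card A = p := hX ▸ card_eq_of_le_centralizer hAA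
    have hAp : IsPGroup p A := IsPGroup.of_card (n := 1) (by rw [hAcard, pow_one])
    have hsylow (Q : Sylow p G) : (Q : Subgroup G) = A :=
      (eq_of_le_of_card_ge (hAp.le_sylow_of_normal Q)
        (by rw [hAcard, card_sylow_eq_of_card_eq_prime hX])).symm
    exact ⟨fun Q R ↦ Sylow.ext ((hsylow Q).trans (hsylow R).symm)⟩
  · intro
    have := P.normal_of_subsingleton
    have : IsCyclic P := isCyclic_of_prime_card hP
    have := isPretransitive_of_normal_of_prime_card hXp hP1
    have hPP : (P : Subgroup G) ≤ centralizer (P : Set G) :=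
      le_centralizer_iff_isMulCommutative.mpr inferInstance
    have := IsCyclic.isSolvable_mulAut P
    exact Group.isSolvable_of_centralizer_le (centralizer_le_of_le_centralizer (X := X) hPP)

end MulAction

/-- Galois: a transitive subgroup `Γ ⊆ S_p` is solvable iff it has a
unique Sylow `p`-subgroup, which then has order `p`. -/
theorem stmt_1 (p : ℕ) (hp : p.Prime) (Γ : Subgroup (Equiv.Perm (Fin p)))
    (htrans : ∀ a b : Fin p, ∃ σ ∈ Γ, σ a = b) :
    IsSolvable ↥Γ ↔
      (Subsingleton (Sylow p ↥Γ) ∧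
        ∀ Q : Sylow p ↥Γ, Nat.card ↥(Q : Subgroup ↥Γ) = p) := by
  have : Fact p.Prime := ⟨hp⟩
  have : IsPretransitive Γ (Fin p) :=
    ⟨fun a b ↦ by obtain ⟨σ, hσ, hσab⟩ := htrans a b; exact ⟨⟨σ, hσ⟩, hσab⟩⟩
  have hX : Nat.card (Fin p) = p := Nat.card_fin p
  exact (isSolvable_iff_subsingleton_sylow hX).trans
    ⟨fun h ↦ ⟨h, card_sylow_eq_of_card_eq_prime hX⟩, And.left⟩
end

section
/- Let 1 → C → Γ → G → 1 be a short exact sequence of finite groups with C commutative, and suppose the orders of C and G are coprime. Then there exists a section G → Γ, and any two sections are conjugate by an element of C. -/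
/-!
A section is obtained from a complement of the kernel, which exists by the Schur–Zassenhaus
theorem. For two sections `s₁ = d · s₂`, the difference `d : G → C` is a 1-cocycle for the
action of `G` on `C` by conjugation through `s₂`. Multiplying the cocycle identity
`d (g h) = g • d h * d g` over all `h` shows that `d ^ |G|` is the coboundary of `(∏ₕ d h)⁻¹`;
since `|G|` is coprime to `|C|`, taking `|G|`-th roots in `C` makes `d` itself a coboundary
`g ↦ g • c / c`, and then `s₁` is `s₂` conjugated by `c⁻¹`.
-/

namespace groupCohomology

variable {G M : Type*} [Group G] [Finite G] [CommGroup M] [MulDistribMulAction G M]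

theorem isMulCoboundary₁_pow_card_of_isMulCocycle₁ {f : G → M} (hf : IsMulCocycle₁ f) :
    IsMulCoboundary₁ fun g => f g ^ Nat.card G := by
  have := Fintype.ofFinite G
  refine ⟨(∏ h, f h)⁻¹, fun g => ?_⟩
  have hprod : ∏ h, f h = (g • ∏ h, f h) * f g ^ Nat.card G := by
    calc ∏ h, f h = ∏ h, f (g * h) := (Equiv.prod_comp (Equiv.mulLeft g) f).symm
      _ = ∏ h, g • f h * f g := by simp only [hf g]
      _ = (g • ∏ h, f h) * f g ^ Nat.card G := by
        rw [Finset.prod_mul_distrib, Finset.smul_prod', Finset.prod_const, Finset.card_univ,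
          Nat.card_eq_fintype_card]
  rw [smul_inv', inv_div_inv, div_eq_iff_eq_mul']
  exact hprod

theorem isMulCoboundary₁_of_isMulCocycle₁_of_coprime (hcop : (Nat.card M).Coprime (Nat.card G))
    {f : G → M} (hf : IsMulCocycle₁ f) : IsMulCoboundary₁ f := by
  obtain ⟨m, hm⟩ := isMulCoboundary₁_pow_card_of_isMulCocycle₁ hf
  set root := (powCoprime hcop).symm
  refine ⟨root m, fun g => (powCoprime hcop).injective ?_⟩
  have hroot : root m ^ Nat.card G = m := (powCoprime hcop).apply_symm_apply m
  rw [powCoprime_apply, powCoprime_apply, div_pow, ← smul_pow', hroot, hm]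

end groupCohomology

namespace GroupExtension

variable {N E G : Type*} [Group E] [Group G]

noncomputable def splittingOfIsComplement' [Group N] (S : GroupExtension N E G) {H : Subgroup E}
    (hH : H.IsComplement' S.inl.range) : S.Splitting where
  toMonoidHom := H.subtype.comp
    (hH.QuotientMulEquiv.toMonoidHom.comp S.quotientRangeInlEquivRight.symm.toMonoidHom)
  rightInverse_rightHom x := by
    have hcoset (q : E ⧸ S.inl.range) : ((hH.QuotientMulEquiv q : E) : E ⧸ S.inl.range) = q := by
      rw [Subgroup.IsComplement'.QuotientMulEquiv_apply]
      exact Subgroup.IsComplement.quotientGroupMk_leftQuotientEquiv _ q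
    have hright (e : E) : S.quotientRangeInlEquivRight e = S.rightHom e := rfl
    show S.rightHom (hH.QuotientMulEquiv (S.quotientRangeInlEquivRight.symm x)) = x
    rw [← hright, hcoset, MulEquiv.apply_symm_apply]

theorem nonempty_splitting_of_coprime [Group N] (S : GroupExtension N E G)
    (hcop : (Nat.card N).Coprime (Nat.card G)) : Nonempty S.Splitting := by
  have hcard : Nat.card S.inl.range = Nat.card N :=
    (Nat.card_congr (MonoidHom.ofInjective S.inl_injective).toEquiv).symm
  have hindex : S.inl.range.index = Nat.card G := by
    rw [Subgroup.index_eq_card]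
    exact Nat.card_congr S.quotientRangeInlEquivRight.toEquiv
  obtain ⟨H, hH⟩ := Subgroup.exists_left_complement'_of_coprime (hcard ▸ hindex ▸ hcop)
  exact ⟨S.splittingOfIsComplement' hH⟩

open groupCohomology in
theorem isConj_of_coprime [CommGroup N] [Finite G] (S : GroupExtension N E G)
    (hcop : (Nat.card N).Coprime (Nat.card G)) (s₁ s₂ : S.Splitting) : S.IsConj s₁ s₂ := by
  let : MulDistribMulAction G N := .compHom N s₂.conjAct
  have hsmul (g : G) (n : N) : S.inl (g • n) = s₂ g * S.inl n * (s₂ g)⁻¹ := S.inl_conjAct_comm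
  have hdiff (g : G) : ∃ n, s₁ g = S.inl n * s₂ g := s₁.exists_eq_inl_mul s₂.toSection g
  choose d hd using hdiff
  have hcocycle : IsMulCocycle₁ d := fun g h => S.inl_injective <| by
    have hgh := hd (g * h)
    rw [map_mul, map_mul, hd g, hd h] at hgh
    rw [mul_comm, map_mul, hsmul, eq_mul_inv_of_mul_eq hgh.symm]
    group
  obtain ⟨c, hc⟩ := isMulCoboundary₁_of_isMulCocycle₁_of_coprime hcop hcocycle
  refine ⟨c⁻¹, funext fun g => ?_⟩
  rw [hd g, ← hc g, div_eq_mul_inv, mul_comm, map_mul, hsmul, map_inv]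
  group

end GroupExtension

theorem stmt_4_general (C Γ G : Type) [CommGroup C] [Group Γ] [Group G]
    [Finite G]
    (f : C →* Γ) (g : Γ →* G)
    (hf : Function.Injective f) (hg : Function.Surjective g)
    (hexact : f.range = g.ker)
    (hcop : Nat.Coprime (Nat.card C) (Nat.card G)) :
    (∃ s : G →* Γ, g.comp s = MonoidHom.id G) ∧
      ∀ s₁ s₂ : G →* Γ, g.comp s₁ = MonoidHom.id G → g.comp s₂ = MonoidHom.id G →
        ∃ c : C, ∀ x : G, s₂ x = f c * s₁ x * (f c)⁻¹ := by
  let S : GroupExtension C Γ G := ⟨f, g, hf, hexact, hg⟩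
  refine ⟨?_, fun s₁ s₂ h₁ h₂ => ?_⟩
  · obtain ⟨s⟩ := S.nonempty_splitting_of_coprime hcop
    exact ⟨s.toMonoidHom, s.rightHom_comp_splitting⟩
  · obtain ⟨c, hc⟩ := S.isConj_of_coprime hcop
      ⟨s₂, fun x => DFunLike.congr_fun h₂ x⟩ ⟨s₁, fun x => DFunLike.congr_fun h₁ x⟩
    exact ⟨c, congrFun hc⟩

/-- Schur–Zassenhaus, abelian kernel: given a short exact sequence
`1 → C → Γ → G → 1` of finite groups with `C` commutative and `|C|` coprime to
`|G|`, sections `G → Γ` exist and any two are conjugate by an element of `C`. -/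
theorem stmt_4 (C Γ G : Type) [CommGroup C] [Group Γ] [Group G]
    [Finite C] [Finite Γ] [Finite G]
    (f : C →* Γ) (g : Γ →* G)
    (hf : Function.Injective f) (hg : Function.Surjective g)
    (hexact : f.range = g.ker)
    (hcop : Nat.Coprime (Nat.card C) (Nat.card G)) :
    (∃ s : G →* Γ, g.comp s = MonoidHom.id G) ∧
      ∀ s₁ s₂ : G →* Γ, g.comp s₁ = MonoidHom.id G → g.comp s₂ = MonoidHom.id G →
        ∃ c : C, ∀ x : G, s₂ x = f c * s₁ x * (f c)⁻¹ :=
  stmt_4_general C Γ G f g hf hg hexact hcop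
end

section
/- Let k be a finite field with q elements and l|k a field extension of degree dividing q−1. For every character χ : Gal(l|k) → k^×, the eigenspace l(χ) = {x ∈ l : σ(x) = χ(σ)x for all σ ∈ Gal(l|k)} is a one-dimensional k-vector space. -/
/-!
The Galois group of `l/k` is generated by the Frobenius `φ : x ↦ x ^ q`, of order `n = [l : k]`,
so `l(χ)` is the `a`-eigenspace of `φ` for `a = χ(φ)`, and `a ^ n = χ(φ ^ n) = 1`. As a `k`-linear
map, `φ` has minimal polynomial `X ^ n - 1`, so `a` is an eigenvalue and `l(χ) ≠ 0`. On the other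
hand `l(χ)` consists of roots of `X ^ q - a X`, so it has at most `q = #k` elements, i.e. dimension
at most one.
-/

open Polynomial Module Module.End

namespace Module.End

variable {R M : Type*} [CommRing R] [AddCommGroup M] [Module R M]

theorem eigenspace_le_eigenspace_pow (f : End R M) (μ : R) (n : ℕ) :
    eigenspace f μ ≤ eigenspace (f ^ n) (μ ^ n) := by
  intro x hx
  rw [mem_eigenspace_iff] at hx ⊢
  induction n with
  | zero => simp
  | succ n ih => rw [pow_succ', mul_apply, ih, map_smul, hx, smul_smul, pow_succ]

end Module.End

theorem AlgEquiv.iInf_eigenspace_eq_eigenspace_of_forall_mem_powers {R A : Type*} [CommRing R]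
    [Ring A] [Algebra R A] (χ : (A ≃ₐ[R] A) →* Rˣ) {g : A ≃ₐ[R] A}
    (hg : ∀ σ, σ ∈ Submonoid.powers g) :
    ⨅ σ : A ≃ₐ[R] A, eigenspace σ.toLinearMap (χ σ : R) = eigenspace g.toLinearMap (χ g : R) := by
  refine le_antisymm (iInf_le _ g) (le_iInf fun σ => ?_)
  obtain ⟨n, rfl⟩ := hg σ
  simpa only [pow_toLinearMap, map_pow, Units.val_pow_eq_pow_val] using
    eigenspace_le_eigenspace_pow _ _ n

namespace FiniteField

variable {K L : Type*} [Field K] [Fintype K] [Field L] [Algebra K L]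

theorem natCard_eigenspace_frobeniusAlgHom_le (a : K) :
    Nat.card (eigenspace (frobeniusAlgHom K L).toLinearMap a) ≤ Nat.card K := by
  rw [← SetLike.coe_sort_coe, Nat.card_coe_set_eq, ← Fintype.card_eq_nat_card]
  set q := Fintype.card K
  have hq : 1 < q := Fintype.one_lt_card
  have hdeg : (X ^ q - C a * X).natDegree = q := by
    have hlt : (C a * X).natDegree < (X ^ q : K[X]).natDegree := by
      rw [natDegree_X_pow]
      exact ((natDegree_C_mul_le a X).trans natDegree_X_le).trans_lt hq
    rw [natDegree_sub_eq_left_of_natDegree_lt hlt, natDegree_X_pow]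
  have hne : (X ^ q - C a * X : K[X]) ≠ 0 := by
    intro h; rw [h, natDegree_zero] at hdeg; omega
  calc _ ≤ ((X ^ q - C a * X : K[X]).rootSet L).ncard := by
        refine Set.ncard_le_ncard (fun x hx => ?_) (Set.toFinite _)
        rw [SetLike.mem_coe, mem_eigenspace_iff, AlgHom.toLinearMap_apply, coe_frobeniusAlgHom,
          Algebra.smul_def] at hx
        rw [mem_rootSet_of_ne hne]
        simpa [sub_eq_zero] using hx
    _ ≤ _ := ncard_rootSet_le _ L
    _ = q := hdeg

theorem mem_powers_frobeniusAlgEquivOfAlgebraic [Finite L] (σ : L ≃ₐ[K] L) :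
    σ ∈ Submonoid.powers (frobeniusAlgEquivOfAlgebraic K L) :=
  have ⟨n, hn⟩ := (bijective_frobeniusAlgEquivOfAlgebraic_pow K L).2 σ
  ⟨n, hn⟩

theorem toLinearMap_frobeniusAlgEquivOfAlgebraic [Algebra.IsAlgebraic K L] :
    (frobeniusAlgEquivOfAlgebraic K L).toLinearMap = (frobeniusAlgHom K L).toLinearMap :=
  rfl

theorem eigenspace_frobeniusAlgHom_ne_bot [Finite L] {a : K} (ha : a ^ finrank K L = 1) :
    eigenspace (frobeniusAlgHom K L).toLinearMap a ≠ ⊥ :=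
  hasEigenvalue_of_isRoot (by simp [minpoly_frobeniusAlgHom, ha])

theorem finrank_eigenspace_frobeniusAlgHom [Finite L] {a : K} (ha : a ^ finrank K L = 1) :
    finrank K (eigenspace (frobeniusAlgHom K L).toLinearMap a) = 1 := by
  set E := eigenspace (frobeniusAlgHom K L).toLinearMap a
  have hpos : 0 < finrank K E :=
    Nat.pos_of_ne_zero (Submodule.finrank_eq_zero.not.mpr (eigenspace_frobeniusAlgHom_ne_bot ha))
  have hle : Nat.card K ^ finrank K E ≤ Nat.card K ^ 1 := by
    rw [pow_one, ← Module.natCard_eq_pow_finrank]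
    exact natCard_eigenspace_frobeniusAlgHom_le a
  have := (Nat.pow_le_pow_iff_right Finite.one_lt_card).mp hle
  omega

end FiniteField

theorem stmt_8_general (k l : Type) [Field k] [Fintype k] [Field l] [Algebra k l]
    [FiniteDimensional k l]
    (χ : (l ≃ₐ[k] l) →* kˣ) :
    Module.finrank k
      ↥(⨅ σ : l ≃ₐ[k] l, Module.End.eigenspace (σ.toLinearMap) ((χ σ : k))) = 1 := by
  have : Finite l := Module.finite_of_finite k
  have hχ : (χ (FiniteField.frobeniusAlgEquivOfAlgebraic k l) : k) ^ finrank k l = 1 := by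
    rw [← Units.val_pow_eq_pow_val, ← map_pow, ← FiniteField.orderOf_frobeniusAlgEquivOfAlgebraic,
      pow_orderOf_eq_one, map_one, Units.val_one]
  rw [AlgEquiv.iInf_eigenspace_eq_eigenspace_of_forall_mem_powers χ
    FiniteField.mem_powers_frobeniusAlgEquivOfAlgebraic,
    FiniteField.toLinearMap_frobeniusAlgEquivOfAlgebraic]
  exact FiniteField.finrank_eigenspace_frobeniusAlgHom hχ

/-- for a finite field `k` with `q` elements and an extension `l|k`
of degree dividing `q−1`, every eigenspace `l(χ) = {x ∈ l | σ x = χ(σ)·x ∀σ}`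
for a character `χ : Gal(l|k) →* kˣ` is a one-dimensional `k`-vector space. -/
theorem stmt_8 (k l : Type) [Field k] [Fintype k] [Field l] [Algebra k l]
    [FiniteDimensional k l]
    (hdeg : Module.finrank k l ∣ Fintype.card k - 1)
    (χ : (l ≃ₐ[k] l) →* kˣ) :
    Module.finrank k
      ↥(⨅ σ : l ≃ₐ[k] l, Module.End.eigenspace (σ.toLinearMap) ((χ σ : k))) = 1 :=
  stmt_8_general k l χ
end

section
/- Let p be a prime and F a field. Let F'|F be a cyclic extension of degree dividing p−1 and L|F' a cyclic extension of degree p. If L|F is Galois, then there exists a degree-p extension E|F with L = EF'; any two such E are conjugate over F, and every F-conjugate of E is contained in L. -/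
/-!
In `G = Gal(L|F)` the subgroup `N = Gal(L|F')` is normal of prime order `p`, and its index
`[F' : F]` is prime to `p`. By the Galois correspondence, the fields `E` with `E ⊔ F' = L` and
`[E : F] = p` are exactly the fixed fields of the complements of `N` in `G`. Schur–Zassenhaus
provides a complement, and since `N` is abelian all complements are conjugate, so all such `E`
are conjugate under `Gal(L|F)`, whose elements extend to automorphisms of `Ω`. Every
`F`-conjugate of `E` lies in `L` because `L|F` is normal.
-/

open scoped Pointwise
open IntermediateField Module

namespace Subgroup

variable {G : Type*} [Group G] {N : Subgroup G} [IsMulCommutative N]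

-- A bare `Quotient.mk''` elaborates into the underlying `Quotient`, which lacks the `G`-action
-- of `N.QuotientDiff`.
def QuotientDiff.mk [N.FiniteIndex] (T : N.LeftTransversal) : N.QuotientDiff := Quotient.mk'' T

variable [Finite G] [N.Normal]

theorem eq_stabilizer_mk_of_isComplement' {M : Subgroup G} (hco : (Nat.card N).Coprime N.index)
    (hM : IsComplement' N M) :
    M = MulAction.stabilizer G (QuotientDiff.mk ⟨(M : Set G), hM.symm⟩) := by
  refine eq_of_le_of_card_ge (fun m hm ↦ ?_) ?_
  · show Quotient.mk'' _ = Quotient.mk'' _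
    congr 1
    exact Subtype.ext (op_smul_coe_set (inv_mem hm))
  · have hN : 0 < Nat.card N := Nat.card_pos
    exact (Nat.eq_of_mul_eq_mul_left hN
      ((isComplement'_stabilizer_of_coprime hco).card_mul_card.trans hM.card_mul_card.symm)).le

theorem exists_conj_eq_of_isComplement'_of_coprime {K K' : Subgroup G}
    (hco : (Nat.card N).Coprime N.index) (hK : IsComplement' N K) (hK' : IsComplement' N K') :
    ∃ g : G, K' = MulAut.conj g • K := by
  obtain ⟨n, hn⟩ := exists_smul_eq hco (QuotientDiff.mk ⟨(K : Set G), hK.symm⟩)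
    (QuotientDiff.mk ⟨(K' : Set G), hK'.symm⟩)
  refine ⟨n, ?_⟩
  rw [eq_stabilizer_mk_of_isComplement' hco hK', eq_stabilizer_mk_of_isComplement' hco hK, ← hn]
  exact MulAction.stabilizer_smul_eq_stabilizer_map_conj (n : G) _

end Subgroup

namespace IsGalois

variable {F L : Type*} [Field F] [Field L] [Algebra F L] [FiniteDimensional F L] [IsGalois F L]

theorem fixingSubgroup_injective :
    Function.Injective (fixingSubgroup : IntermediateField F L → Subgroup Gal(L/F)) :=
  intermediateFieldEquivSubgroup.injective

theorem isComplement'_fixingSubgroup_iff {K E : IntermediateField F L} :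
    Subgroup.IsComplement' K.fixingSubgroup E.fixingSubgroup ↔
      E ⊔ K = ⊤ ∧ finrank F E = finrank K L := by
  rw [Subgroup.isComplement'_iff_card_mul_and_disjoint, card_fixingSubgroup_eq_finrank,
    card_fixingSubgroup_eq_finrank, card_aut_eq_finrank, ← finrank_mul_finrank F E L,
    disjoint_iff, ← fixingSubgroup_sup, ← fixingSubgroup_top, fixingSubgroup_injective.eq_iff,
    sup_comm, and_comm, Nat.mul_right_cancel_iff finrank_pos]
  exact and_congr_right fun _ ↦ eq_comm

theorem index_fixingSubgroup (K : IntermediateField F L) :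
    K.fixingSubgroup.index = finrank F K := by
  have h := K.fixingSubgroup.card_mul_index
  rw [card_fixingSubgroup_eq_finrank, card_aut_eq_finrank, ← finrank_mul_finrank F K L,
    mul_comm] at h
  exact Nat.eq_of_mul_eq_mul_right finrank_pos h

theorem exists_sup_eq_top_and_conj_of_coprime (K : IntermediateField F L) [IsGalois F K]
    [IsMulCommutative K.fixingSubgroup] (hco : (finrank K L).Coprime (finrank F K)) :
    ∃ E : IntermediateField F L, finrank F E = finrank K L ∧ E ⊔ K = ⊤ ∧
      ∀ E' : IntermediateField F L, finrank F E' = finrank K L → E' ⊔ K = ⊤ →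
        ∃ g : Gal(L/F), E' = E.map g := by
  rw [← card_fixingSubgroup_eq_finrank, ← index_fixingSubgroup] at hco
  obtain ⟨H, hH⟩ := Subgroup.exists_right_complement'_of_coprime hco
  rw [← fixingSubgroup_fixedField H, isComplement'_fixingSubgroup_iff] at hH
  refine ⟨fixedField H, hH.2, hH.1, fun E' hE' hsup ↦ ?_⟩
  obtain ⟨g, hg⟩ := Subgroup.exists_conj_eq_of_isComplement'_of_coprime hco
    (isComplement'_fixingSubgroup_iff.2 hH) (isComplement'_fixingSubgroup_iff.2 ⟨hsup, hE'⟩)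
  exact ⟨g, fixingSubgroup_injective (by rw [map_fixingSubgroup, hg])⟩

end IsGalois

theorem Nat.Coprime.of_dvd_sub_one {n d : ℕ} (hn : 1 ≤ n) (hd : d ∣ n - 1) : n.Coprime d :=
  ((Nat.coprime_self_sub_right hn).2 (Nat.coprime_one_right n)).coprime_dvd_right hd

namespace IntermediateField

variable {F Ω : Type*} [Field F] [Field Ω] [Algebra F Ω]

theorem finrank_restrict_eq_finrank_extendScalars {F' L : IntermediateField F Ω}
    [FiniteDimensional F F'] (h : F' ≤ L) :
    finrank (restrict h) L = finrank F' (extendScalars h) := by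
  have hL := finrank_mul_finrank F (restrict h) L
  rw [← (restrictAlgEquiv h).toLinearEquiv.finrank_eq] at hL
  exact Nat.eq_of_mul_eq_mul_left finrank_pos
    (hL.trans (finrank_mul_finrank F F' (extendScalars h)).symm)

theorem lift_map_eq_map_liftNormal [Normal F Ω]
    {L : IntermediateField F Ω} (E : IntermediateField F L) (g : Gal(L/F)) :
    lift (E.map (g : L →ₐ[F] L)) = (lift E).map (g.liftNormal Ω : Ω →ₐ[F] Ω) := by
  rw [lift, lift, map_map, map_map]
  congr 1
  ext x
  exact (g.liftNormal_commutes Ω x).symm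

theorem finrank_lift_sup_eq_and_conj_of_restrict [Normal F Ω] {K L : IntermediateField F Ω}
    (hKL : K ≤ L) {n : ℕ} {E : IntermediateField F L} (hE : finrank F E = n)
    (hEK : E ⊔ restrict hKL = ⊤)
    (hconj : ∀ E' : IntermediateField F L, finrank F E' = n → E' ⊔ restrict hKL = ⊤ →
      ∃ g : Gal(L/F), E' = E.map g) :
    finrank F (lift E) = n ∧ lift E ⊔ K = L ∧
      ∀ E' : IntermediateField F Ω, finrank F E' = n → E' ⊔ K = L →
        ∃ σ : Ω ≃ₐ[F] Ω, E' = (lift E).map σ.toAlgHom := by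
  refine ⟨(liftAlgEquiv E).toLinearEquiv.finrank_eq.symm.trans hE,
    by rw [← lift_restrict hKL, ← lift_sup, hEK, lift_top], fun E' hE' hsup ↦ ?_⟩
  have hE'L : E' ≤ L := hsup ▸ le_sup_left
  obtain ⟨g, hg⟩ := hconj (restrict hE'L)
    ((restrictAlgEquiv hE'L).toLinearEquiv.finrank_eq.symm.trans hE')
    (lift_injective _ (by rw [lift_sup, lift_restrict, lift_restrict, hsup, lift_top]))
  refine ⟨g.liftNormal Ω, ?_⟩
  rw [← lift_restrict hE'L, hg, lift_map_eq_map_liftNormal]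

end IntermediateField

theorem stmt_11_general (p : ℕ) (hp : p.Prime)
    (F Ω : Type) [Field F] [Field Ω] [Algebra F Ω]
    [IsAlgClosed Ω] [Algebra.IsAlgebraic F Ω]
    (F' L : IntermediateField F Ω) (hFL : F' ≤ L)
    [IsGalois F ↥F']
    (hdeg' : Module.finrank F ↥F' ∣ p - 1)
    (hLdeg : Module.finrank ↥F' ↥(IntermediateField.extendScalars hFL) = p)
    (hGal : IsGalois F ↥L) :
    ∃ E : IntermediateField F Ω, Module.finrank F ↥E = p ∧ E ⊔ F' = L ∧
      (∀ E' : IntermediateField F Ω, Module.finrank F ↥E' = p → E' ⊔ F' = L →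
        ∃ σ : Ω ≃ₐ[F] Ω, E' = E.map σ.toAlgHom) ∧
      (∀ σ : ↥E →ₐ[F] Ω, σ.fieldRange ≤ L) := by
  have : IsAlgClosure F Ω := ⟨inferInstance, inferInstance⟩
  have : Normal F Ω := IsAlgClosure.normal F Ω
  set K := restrict hFL
  have : FiniteDimensional F F' :=
    .of_finrank_pos (Nat.pos_of_dvd_of_pos hdeg' (Nat.sub_pos_of_lt hp.one_lt))
  have : FiniteDimensional F K := (restrictAlgEquiv hFL).toLinearEquiv.finiteDimensional
  have hKL : finrank K L = p := (finrank_restrict_eq_finrank_extendScalars hFL).trans hLdeg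
  have : FiniteDimensional K L := .of_finrank_pos (hKL ▸ hp.pos)
  have : FiniteDimensional F L := .trans F K L
  have : IsGalois F K := .of_algEquiv (restrictAlgEquiv hFL)
  have : IsCyclic K.fixingSubgroup :=
    isCyclic_of_prime_card (hp := ⟨hp⟩) ((IsGalois.card_fixingSubgroup_eq_finrank K).trans hKL)
  have hco : (finrank K L).Coprime (finrank F K) := by
    rw [hKL, ← (restrictAlgEquiv hFL).toLinearEquiv.finrank_eq]
    exact .of_dvd_sub_one hp.one_le hdeg'
  obtain ⟨E, hE, hEK, hconj⟩ := IsGalois.exists_sup_eq_top_and_conj_of_coprime K hco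
  rw [hKL] at hE hconj
  obtain ⟨hE', hEK', hconj'⟩ := finrank_lift_sup_eq_and_conj_of_restrict hFL hE hEK hconj
  exact ⟨lift E, hE', hEK', hconj',
    fun σ ↦ σ.fieldRange_le_normalClosure.trans (normalClosure_le_iff_of_normal.2 (lift_le E))⟩

/-- let `F'|F` be cyclic of degree dividing `p−1` and `L|F'` cyclic
of degree `p` (inside an algebraic closure `Ω` of `F`).  If `L|F` is Galois,
then there is a degree-`p` extension `E|F` with `L = E F'`; any two such `E` are
conjugate over `F`, and every `F`-conjugate of `E` is contained in `L`. -/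
theorem stmt_11 (p : ℕ) (hp : p.Prime)
    (F Ω : Type) [Field F] [Field Ω] [Algebra F Ω]
    [IsAlgClosed Ω] [Algebra.IsAlgebraic F Ω]
    (F' L : IntermediateField F Ω) (hFL : F' ≤ L)
    [IsGalois F ↥F'] (hcyc' : IsCyclic (↥F' ≃ₐ[F] ↥F'))
    (hdeg' : Module.finrank F ↥F' ∣ p - 1)
    (hLgal' : IsGalois ↥F' ↥(IntermediateField.extendScalars hFL))
    (hLcyc : IsCyclic (↥(IntermediateField.extendScalars hFL) ≃ₐ[↥F']
      ↥(IntermediateField.extendScalars hFL)))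
    (hLdeg : Module.finrank ↥F' ↥(IntermediateField.extendScalars hFL) = p)
    (hGal : IsGalois F ↥L) :
    ∃ E : IntermediateField F Ω, Module.finrank F ↥E = p ∧ E ⊔ F' = L ∧
      (∀ E' : IntermediateField F Ω, Module.finrank F ↥E' = p → E' ⊔ F' = L →
        ∃ σ : Ω ≃ₐ[F] Ω, E' = E.map σ.toAlgHom) ∧
      (∀ σ : ↥E →ₐ[F] Ω, σ.fieldRange ≤ L) :=
  stmt_11_general p hp F Ω F' L hFL hdeg' hLdeg hGal
end

section
/- Let p be a prime, F a field of characteristic p, K an abelian extension of F of exponent dividing p−1 with group G = Gal(K|F), and D an F_p-line in K/℘(K) where ℘(x) = x^p − x. Let L = K(℘⁻¹(D)) be the corresponding degree-p cyclic Artin–Schreier extension. If L|F is Galois and G acts on D via the character χ : G → F_p^×, then the conjugation action of G on Gal(L|K) is via the character χ⁻¹. -/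
open Polynomial in
lemma aux_root_fp {p : ℕ} (hp : p.Prime) {Ω : Type} [Field Ω] [CharP Ω p]
    (z : Ω) (hz : z ^ p = z) : ∃ c : ZMod p, z = ((c.val : ℕ) : Ω) := by
  haveI : Fact p.Prime := ⟨hp⟩
  by_contra hcon
  push_neg at hcon
  set ψ : ZMod p →+* Ω := ZMod.castHom dvd_rfl Ω with hψdef
  have hψ : ∀ c : ZMod p, ψ c = ((c.val : ℕ) : Ω) := by
    intro c
    rw [hψdef, ZMod.castHom_apply, ← ZMod.natCast_val]
  have hzero : (X ^ p - X : Polynomial Ω) = 0 := by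
    apply Polynomial.eq_zero_of_natDegree_lt_card_of_eval_eq_zero _
      (f := fun o : Option (ZMod p) => o.elim z (fun c => ψ c))
    · rintro (_ | c) (_ | d) h
      · rfl
      · exact absurd (h.trans (hψ d)) (hcon d)
      · exact absurd (h.symm.trans (hψ c)) (hcon c)
      · exact congrArg some (ψ.injective h)
    · rintro (_ | c)
      · simp [hz]
      · simp [← map_pow, ZMod.pow_card]
    · rw [FiniteField.X_pow_card_sub_X_natDegree_eq Ω hp.one_lt, Fintype.card_option,
        ZMod.card]
      exact Nat.lt_succ_self p
  exact FiniteField.X_pow_card_sub_X_ne_zero Ω hp.one_lt hzero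

set_option maxHeartbeats 2000000 in
set_option synthInstance.maxHeartbeats 1000000 in
/-- let `F` be a field of characteristic `p`, `K` (inside an
algebraic closure `Ω`) an abelian extension of `F` of exponent dividing `p−1`,
`G = Gal(K|F)`, and `D` the `𝔽_p`-line in `K/℘(K)` spanned by the class of
`a ∈ K`, `a ∉ ℘(K)`; let `L = K(℘⁻¹(D))` be the corresponding Artin–Schreier
extension, generated by `x` with `xᵖ − x = a`.  If `L|F` is Galois and `G` acts
on `D` via the character `χ`, then the conjugation action of `G` on `Gal(L|K)`
is via `χ⁻¹`: any `γ ∈ Gal(L|F)` restricting to `σ` on `K` satisfies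
`γτγ⁻¹ = τ^(χ⁻¹(σ))` for every `τ ∈ Gal(L|K)`. -/
theorem stmt_13 (p : ℕ) (hp : p.Prime)
    (F Ω : Type) [Field F] [Field Ω] [Algebra F Ω]
    [IsAlgClosed Ω] [Algebra.IsAlgebraic F Ω] [CharP F p]
    (K : IntermediateField F Ω) [IsGalois F ↥K]
    (habelian : ∀ σ τ : ↥K ≃ₐ[F] ↥K, σ * τ = τ * σ)
    (hexp : Monoid.exponent (↥K ≃ₐ[F] ↥K) ∣ p - 1)
    (a : ↥K) (hna : ¬ ∃ b : ↥K, b ^ p - b = a)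
    (x : Ω) (hx : x ^ p - x = algebraMap ↥K Ω a)
    (χ : (↥K ≃ₐ[F] ↥K) →* (ZMod p)ˣ)
    (hχ : ∀ σ : ↥K ≃ₐ[F] ↥K, ∃ b : ↥K,
      σ a = (((χ σ : ZMod p).val : ↥K)) * a + (b ^ p - b))
    (hgal : IsGalois F ↥((IntermediateField.adjoin ↥K {x}).restrictScalars F))
    (hKL : K ≤ (IntermediateField.adjoin ↥K {x}).restrictScalars F) :
    ∀ γ : ↥((IntermediateField.adjoin ↥K {x}).restrictScalars F) ≃ₐ[F]
          ↥((IntermediateField.adjoin ↥K {x}).restrictScalars F),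
    ∀ σ : ↥K ≃ₐ[F] ↥K,
      (∀ y : ↥K, γ (IntermediateField.inclusion hKL y)
          = IntermediateField.inclusion hKL (σ y)) →
    ∀ τ : ↥((IntermediateField.adjoin ↥K {x}).restrictScalars F) ≃ₐ[F]
          ↥((IntermediateField.adjoin ↥K {x}).restrictScalars F),
      (∀ y : ↥K, τ (IntermediateField.inclusion hKL y)
          = IntermediateField.inclusion hKL y) →
      γ * τ * γ⁻¹ = τ ^ ((((χ σ)⁻¹ : (ZMod p)ˣ) : ZMod p)).val := by
  haveI : Fact p.Prime := ⟨hp⟩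
  haveI hΩchar : CharP Ω p := charP_of_injective_algebraMap (algebraMap F Ω).injective p
  set E := IntermediateField.adjoin ↥K {x} with hE
  set L := E.restrictScalars F with hL
  haveI hLchar : CharP ↥L p := charP_of_injective_algebraMap (algebraMap F ↥L).injective p
  intro γ σ hγσ τ hτ
  set n : ℕ := ((((χ σ)⁻¹ : (ZMod p)ˣ) : ZMod p)).val with hn
  set m : ℕ := ((χ σ : ZMod p)).val with hm
  have hxE : x ∈ L := IntermediateField.mem_adjoin_simple_self ↥K x
  set xL : ↥L := ⟨x, hxE⟩ with hxLdef
  have hx' : x ^ p - x = (a : Ω) := hx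
  -- coercion of inclusion
  have hcoe : ∀ y : ↥K, ((IntermediateField.inclusion hKL y : ↥L) : Ω) = (y : Ω) :=
    fun y => rfl
  -- nat casts are fixed by Frobenius
  have natfixΩ : ∀ k : ℕ, ((k : Ω)) ^ p = (k : Ω) := by
    intro k
    rw [← Nat.cast_pow]
    refine CharP.natCast_eq_natCast' Ω p ?_
    have := ZMod.pow_card (k : ZMod p)
    rwa [← Nat.cast_pow, ZMod.natCast_eq_natCast_iff] at this
  -- x^p - x = a inside L
  have hxpa : xL ^ p - xL = IntermediateField.inclusion hKL a := by
    apply Subtype.ext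
    push_cast
    rw [hx']
    rfl
  -- action of τ on x
  obtain ⟨c, hc⟩ : ∃ c : ZMod p, ((τ xL : Ω)) = x + ((c.val : ℕ) : Ω) := by
    have e1 : (τ xL) ^ p - τ xL = IntermediateField.inclusion hKL a := by
      rw [← map_pow, ← map_sub, hxpa, hτ a]
    have e1' : ((τ xL : Ω)) ^ p - ((τ xL : Ω)) = (a : Ω) := by
      have := congrArg (fun z : ↥L => (z : Ω)) e1
      push_cast at this
      exact this
    obtain ⟨c, hc⟩ := aux_root_fp hp ((τ xL : Ω) - x) (by
      rw [sub_pow_char]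
      linear_combination e1' - hx')
    exact ⟨c, by linear_combination hc⟩
  have hτx : τ xL = xL + ((c.val : ℕ) : ↥L) := by
    apply Subtype.ext
    push_cast
    rw [hc]
  -- powers of τ fix K
  have hτpowK : ∀ j : ℕ, ∀ y : ↥K,
      (τ ^ j) (IntermediateField.inclusion hKL y) = IntermediateField.inclusion hKL y := by
    intro j
    induction j with
    | zero => intro y; rfl
    | succ j ih =>
      intro y
      rw [pow_succ, AlgEquiv.mul_apply, hτ y, ih y]
  -- powers of τ on x
  have hτpow : ∀ j : ℕ, (τ ^ j) xL = xL + ((j * c.val : ℕ) : ↥L) := by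
    intro j
    induction j with
    | zero => simp
    | succ j ih =>
      rw [pow_succ', AlgEquiv.mul_apply, ih, map_add, map_natCast, hτx]
      push_cast
      ring
  -- action of γ on x
  obtain ⟨b, hb⟩ := hχ σ
  have hσa : ((σ a : Ω)) = (m : Ω) * (a : Ω) + (((b : Ω)) ^ p - (b : Ω)) := by
    rw [hb]
    push_cast
    ring
  obtain ⟨e, he⟩ : ∃ e : ZMod p,
      ((γ xL : Ω)) = (m : Ω) * x + (b : Ω) + ((e.val : ℕ) : Ω) := by
    have e2 : (γ xL) ^ p - γ xL = IntermediateField.inclusion hKL (σ a) := by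
      rw [← map_pow, ← map_sub, hxpa, hγσ a]
    have e2' : ((γ xL : Ω)) ^ p - ((γ xL : Ω)) = (σ a : Ω) := by
      have := congrArg (fun z : ↥L => (z : Ω)) e2
      push_cast at this
      exact this
    obtain ⟨e, he⟩ := aux_root_fp hp ((γ xL : Ω) - ((m : Ω) * x + (b : Ω))) (by
      rw [sub_pow_char, add_pow_char, mul_pow, natfixΩ m]
      linear_combination e2' + hσa - (m : Ω) * hx')
    exact ⟨e, by linear_combination he⟩
  have hγx : γ xL = (m : ↥L) * xL + IntermediateField.inclusion hKL b + ((e.val : ℕ) : ↥L) := by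
    apply Subtype.ext
    push_cast
    rw [he, hcoe b]
  -- key cast identity : m * (n * c.val) ≡ c.val  [MOD p]
  have hmnc : ((m * (n * c.val) : ℕ) : ↥L) = ((c.val : ℕ) : ↥L) := by
    refine CharP.natCast_eq_natCast' (↥L) p ?_
    rw [← ZMod.natCast_eq_natCast_iff]
    push_cast
    rw [hm, hn, ZMod.natCast_val, ZMod.natCast_val, ZMod.natCast_val,
      ZMod.cast_id, ZMod.cast_id, ZMod.cast_id, ← mul_assoc, Units.mul_inv, one_mul]
  -- τ^n on γ x
  have h5 : (τ ^ n) (γ xL) = γ xL + ((c.val : ℕ) : ↥L) := by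
    rw [hγx, map_add, map_add, map_mul, map_natCast, map_natCast, hτpowK n b, hτpow n]
    have hthis : ((m : ↥L)) * ((n * c.val : ℕ) : ↥L) = ((c.val : ℕ) : ↥L) := by
      rw [← hmnc]; push_cast; ring
    linear_combination hthis
  -- γ⁻¹ facts
  have hγinv : ∀ z : ↥L, γ⁻¹ (γ z) = z := by
    intro z
    rw [← AlgEquiv.mul_apply, inv_mul_cancel, AlgEquiv.one_apply]
  -- the two automorphisms agree
  have key : ∀ (ρ₁ ρ₂ : ↥L ≃ₐ[F] ↥L),
      (∀ y : ↥K, ρ₁ (IntermediateField.inclusion hKL y) = IntermediateField.inclusion hKL y) →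
      (∀ y : ↥K, ρ₂ (IntermediateField.inclusion hKL y) = IntermediateField.inclusion hKL y) →
      ρ₁ xL = ρ₂ xL → ρ₁ = ρ₂ := by
    intro ρ₁ ρ₂ h1 h2 hx12
    have main : ∀ (z : Ω) (hz : z ∈ E), ρ₁ ⟨z, hz⟩ = ρ₂ ⟨z, hz⟩ := by
      intro z hz
      induction hz using IntermediateField.adjoin_induction with
      | mem z hzs =>
        rcases Set.mem_singleton_iff.mp hzs with rfl
        exact hx12
      | algebraMap k =>
        have hk : (⟨algebraMap ↥K Ω k, by exact_mod_cast IntermediateField.algebraMap_mem E k⟩ : ↥L)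
            = IntermediateField.inclusion hKL k := rfl
        rw [hk, h1 k, h2 k]
      | add z w hz hw ihz ihw =>
        have : (⟨z + w, add_mem hz hw⟩ : ↥L) = ⟨z, hz⟩ + ⟨w, hw⟩ := rfl
        rw [this, map_add, map_add, ihz, ihw]
      | inv z hz ihz =>
        have : (⟨z⁻¹, inv_mem hz⟩ : ↥L) = (⟨z, hz⟩ : ↥L)⁻¹ := rfl
        rw [this, map_inv₀, map_inv₀, ihz]
      | mul z w hz hw ihz ihw =>
        have : (⟨z * w, mul_mem hz hw⟩ : ↥L) = ⟨z, hz⟩ * ⟨w, hw⟩ := rfl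
        rw [this, map_mul, map_mul, ihz, ihw]
    exact AlgEquiv.ext fun z => main z.1 z.2
  -- conclude
  have hfinal : γ⁻¹ * τ ^ n * γ = τ := by
    apply key
    · intro y
      rw [AlgEquiv.mul_apply, AlgEquiv.mul_apply, hγσ y, hτpowK n (σ y)]
      have := hγσ y
      calc γ⁻¹ (IntermediateField.inclusion hKL (σ y))
          = γ⁻¹ (γ (IntermediateField.inclusion hKL y)) := by rw [this]
        _ = _ := hγinv _
    · exact hτ
    · rw [AlgEquiv.mul_apply, AlgEquiv.mul_apply, h5, map_add, map_natCast, hγinv, hτx]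
  calc γ * τ * γ⁻¹ = γ * (γ⁻¹ * τ ^ n * γ) * γ⁻¹ := by rw [hfinal]
    _ = τ ^ n := by group
end

section
/- Let p be an odd prime and q a prime power. Then Σ_{i≥0} q^{i−(pi+j_i)} = q^{p−2}(q^{(p−2)(p−1)}−1) / ((q^{p−2}−1)(q^{(p−1)²}−1)), where for each i ≥ 0, j_i ∈ [1, p−1] is defined by the congruence i + j_i ≡ 0 (mod p−1). -/
/-!
Put `m = p - 1` and `t = q⁻¹`, so the summand is `t ^ (m * i + j i)`. Writing `i = m * n + r`
with `r < m`, the congruence forces `j i = m - r`, hence `m * i + j i = m + m² n + (m - 1) r`.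
The sum thus splits into a geometric series in `t ^ m²` times a finite geometric sum in
`t ^ (m - 1)`, and the closed form is a rearrangement of `t ^ m / (1 - t ^ m²)` times
`(1 - t ^ ((m - 1) m)) / (1 - t ^ (m - 1))`.
-/

open Finset

lemma eq_sub_mod_of_dvd_add {m i j : ℕ} (hj : 1 ≤ j) (hjm : j ≤ m) (hdvd : m ∣ i + j) :
    j = m - i % m := by
  have hmod : i % m < m := Nat.mod_lt i (by omega)
  have hdvd' : m ∣ i % m + j := by
    rw [← Nat.div_add_mod i m, add_assoc] at hdvd
    exact (Nat.dvd_add_right (Nat.dvd_mul_right m _)).1 hdvd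
  have := Nat.eq_of_dvd_of_lt_two_mul (by omega) hdvd' (by omega)
  omega

lemma pow_mul_add_sub_mod (t : ℝ) {m : ℕ} (hm : 0 < m) (i : ℕ) :
    t ^ (m * i + (m - i % m)) = t ^ m * ((t ^ m ^ 2) ^ (i / m) * (t ^ (m - 1)) ^ (i % m)) := by
  have hexp : m * i + (m - i % m) = m + (m ^ 2 * (i / m) + (m - 1) * (i % m)) := by
    have hmod : i % m < m := Nat.mod_lt i hm
    have hi := Nat.div_add_mod i m
    zify [hmod.le, hm] at hi ⊢
    linear_combination (m : ℤ) * hi.symm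
  rw [hexp, pow_add, pow_add, pow_mul, pow_mul]

lemma tsum_pow_div_mul_pow_mod {x y : ℝ} (hx0 : 0 ≤ x) (hx1 : x < 1) (hy : 0 ≤ y)
    (m : ℕ) [NeZero m] :
    ∑' i, x ^ (i / m) * y ^ (i % m) = (1 - x)⁻¹ * ∑ r ∈ range m, y ^ r := by
  let f : ℕ × Fin m → ℝ := fun z => x ^ z.1 * y ^ (z.2 : ℕ)
  have hf : Summable f :=
    (summable_geometric_of_lt_one hx0 hx1).mul_of_nonneg
      (Summable.of_finite (f := fun r : Fin m => y ^ (r : ℕ))) (fun _ => by positivity)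
      (fun _ => by positivity)
  calc ∑' i, x ^ (i / m) * y ^ (i % m) = ∑' z, f z := by
        rw [← (Nat.divModEquiv m).tsum_eq]
        simp [f, Nat.divModEquiv_apply]
    _ = ∑' n, x ^ n * ∑ r : Fin m, y ^ (r : ℕ) := by
        rw [hf.tsum_prod' fun _ => Summable.of_finite]
        simp [f, tsum_fintype, mul_sum]
    _ = (1 - x)⁻¹ * ∑ r ∈ range m, y ^ r := by
        rw [tsum_mul_right, tsum_geometric_of_lt_one hx0 hx1, Fin.sum_univ_eq_sum_range]

lemma tsum_pow_mul_add_of_dvd {t : ℝ} (ht0 : 0 ≤ t) (ht1 : t < 1) {m : ℕ} (hm : 0 < m)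
    {j : ℕ → ℕ} (hj : ∀ i, 1 ≤ j i ∧ j i ≤ m ∧ m ∣ i + j i) :
    ∑' i, t ^ (m * i + j i) = t ^ m * ((1 - t ^ m ^ 2)⁻¹ * ∑ r ∈ range m, (t ^ (m - 1)) ^ r) := by
  have : NeZero m := ⟨hm.ne'⟩
  have hterm i : t ^ (m * i + j i) = t ^ m * ((t ^ m ^ 2) ^ (i / m) * (t ^ (m - 1)) ^ (i % m)) := by
    obtain ⟨h1, h2, h3⟩ := hj i
    rw [eq_sub_mod_of_dvd_add h1 h2 h3, pow_mul_add_sub_mod t hm]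
  rw [tsum_congr hterm, tsum_mul_left, tsum_pow_div_mul_pow_mod (by positivity)
    (pow_lt_one₀ ht0 ht1 (by positivity)) (by positivity)]

theorem stmt_18_general (p q : ℕ) (hodd : p ≠ 2)
    (hq : ∃ r k : ℕ, r.Prime ∧ 0 < k ∧ q = r ^ k)
    (j : ℕ → ℕ)
    (hj : ∀ i : ℕ, 1 ≤ j i ∧ j i ≤ p - 1 ∧ (p - 1) ∣ (i + j i)) :
    ∑' i : ℕ, (q : ℝ) ^ ((i : ℤ) - ((p : ℤ) * (i : ℤ) + (j i : ℤ)))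
      = (q : ℝ) ^ (p - 2) * ((q : ℝ) ^ ((p - 2) * (p - 1)) - 1) /
          (((q : ℝ) ^ (p - 2) - 1) * ((q : ℝ) ^ ((p - 1) ^ 2) - 1)) := by
  obtain ⟨k, rfl⟩ : ∃ k, p = k + 3 := ⟨p - 3, by have := (hj 0).1.trans (hj 0).2.1; omega⟩
  have hq1 : 1 < (q : ℝ) := by
    obtain ⟨r, n, hr, hn, rfl⟩ := hq
    exact_mod_cast Nat.one_lt_pow hn.ne' hr.one_lt
  have hterm (i : ℕ) : (q : ℝ) ^ ((i : ℤ) - (((k + 3 : ℕ) : ℤ) * i + j i))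
      = (q : ℝ)⁻¹ ^ ((k + 2) * i + j i) := by
    rw [inv_pow, ← zpow_natCast, ← zpow_neg]
    push_cast
    ring_nf
  have ht1 : (q : ℝ)⁻¹ < 1 := inv_lt_one_of_one_lt₀ hq1
  rw [tsum_congr hterm, tsum_pow_mul_add_of_dvd (m := k + 2) (by positivity) ht1 (by omega) hj,
    geom_sum_eq (pow_lt_one₀ (by positivity) ht1 (by omega)).ne]
  simp only [show k + 2 - 1 = k + 1 from rfl, show k + 3 - 2 = k + 1 from rfl,
    show k + 3 - 1 = k + 2 from rfl]
  generalize (q : ℝ) = Q at hq1 ⊢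
  have hQ : Q ≠ 0 := by positivity
  have hQk : 1 - Q ^ (k + 1) ≠ 0 := (sub_neg.2 (one_lt_pow₀ hq1 (by omega))).ne
  have hQk' : Q ^ (k + 1) - 1 ≠ 0 := (sub_pos.2 (one_lt_pow₀ hq1 (by omega))).ne'
  have hQm : Q ^ ((k + 2) ^ 2) - 1 ≠ 0 := (sub_pos.2 (one_lt_pow₀ hq1 (by positivity))).ne'
  simp only [inv_pow, ← pow_mul]
  field_simp
  ring

/-- for an odd prime `p`, a prime power `q`, and `j_i ∈ [1, p−1]`
defined by `i + j_i ≡ 0 (mod p−1)`,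
`Σ_{i≥0} q^{i−(pi+j_i)} = q^{p−2}(q^{(p−2)(p−1)}−1)/((q^{p−2}−1)(q^{(p−1)²}−1))`. -/
theorem stmt_18 (p q : ℕ) (hp : p.Prime) (hodd : p ≠ 2)
    (hq : ∃ r k : ℕ, r.Prime ∧ 0 < k ∧ q = r ^ k)
    (j : ℕ → ℕ)
    (hj : ∀ i : ℕ, 1 ≤ j i ∧ j i ≤ p - 1 ∧ (p - 1) ∣ (i + j i)) :
    ∑' i : ℕ, (q : ℝ) ^ ((i : ℤ) - ((p : ℤ) * (i : ℤ) + (j i : ℤ)))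
      = (q : ℝ) ^ (p - 2) * ((q : ℝ) ^ ((p - 2) * (p - 1)) - 1) /
          (((q : ℝ) ^ (p - 2) - 1) * ((q : ℝ) ^ ((p - 1) ^ 2) - 1)) :=
  stmt_18_general p q hodd hq j hj
end

section
/- Let p be an odd prime and q > 1 a real number. For a ∈ [0, p−2], define j_{a,i} ∈ [1, p−1] for each i ≥ 0 by the congruence j_{a,i} ≡ a − i (mod p−1). Then Σ_{i=a}^{∞} q^{i−(pi+j_{a,i})} = q^{p−2}(q^{(p−2)(p−1)}−1) / (q^{(p−1)a}(q^{p−2}−1)(q^{(p−1)²}−1)). -/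
lemma stmt_19_aux (q X A Y : ℝ) (hq : 1 < q) (hX : 0 < X) (hA : 1 < A) (hY : 1 < Y) :
    (X * (A * q))⁻¹ * ((1 - (Y * (A * q))⁻¹)⁻¹ * ((Y⁻¹ - 1) / (A⁻¹ - 1)))
      = A * (Y - 1) / (X * (A - 1) * (Y * (A * q) - 1)) := by
  have hq0 : (0:ℝ) < q := by linarith
  have hA0 : (0:ℝ) < A := by linarith
  have hY0 : (0:ℝ) < Y := by linarith
  have hAq : 1 < A * q := one_lt_mul hA.le hq
  have hYAq : 1 < Y * (A * q) := one_lt_mul hY.le hAq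
  have h1 : X ≠ 0 := ne_of_gt hX
  have h2 : A ≠ 0 := ne_of_gt hA0
  have h3 : q ≠ 0 := ne_of_gt hq0
  have h4 : Y ≠ 0 := ne_of_gt hY0
  have h5 : A - 1 ≠ 0 := by intro h; nlinarith
  have h6 : Y * (A * q) - 1 ≠ 0 := by intro h; nlinarith
  have h7 : A⁻¹ - 1 ≠ 0 := by
    intro h
    have h' : A⁻¹ = 1 := by linarith
    have : A = 1 := by
      field_simp at h'
      linarith
    exact h5 (by linarith)
  have h8 : 1 - (Y * (A * q))⁻¹ ≠ 0 := by
    intro h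
    have h' : (Y * (A * q))⁻¹ = 1 := by linarith
    have : Y * (A * q) = 1 := by
      field_simp at h'
      linarith
    exact h6 (by linarith)
  have h5' : (1:ℝ) - A ≠ 0 := fun h => h5 (by linarith)
  have e1 : A⁻¹ - 1 = (1 - A) / A := by field_simp
  have e2 : Y⁻¹ - 1 = (1 - Y) / Y := by field_simp
  have e3 : 1 - (Y * (A * q))⁻¹ = (Y * (A * q) - 1) / (Y * (A * q)) := by
    field_simp
  rw [e1, e2, e3, inv_div, div_div_div_eq]
  field_simp
  ring

set_option maxHeartbeats 1600000 in
/-- for an odd prime `p`, a real `q > 1`, `a ∈ [0, p−2]`, and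
`j_{a,i} ∈ [1, p−1]` defined by `j_{a,i} ≡ a − i (mod p−1)`,
`Σ_{i=a}^{∞} q^{i−(pi+j_{a,i})}
  = q^{p−2}(q^{(p−2)(p−1)}−1)/(q^{(p−1)a}(q^{p−2}−1)(q^{(p−1)²}−1))`. -/
theorem stmt_19 (p : ℕ) (hp : p.Prime) (hodd : p ≠ 2)
    (q : ℝ) (hq : 1 < q)
    (a : ℕ) (ha : a ≤ p - 2)
    (j : ℕ → ℕ)
    (hj : ∀ i : ℕ, 1 ≤ j i ∧ j i ≤ p - 1 ∧
      ((p : ℤ) - 1) ∣ ((j i : ℤ) - ((a : ℤ) - (i : ℤ)))) :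
    ∑' n : ℕ, q ^ (((a + n : ℕ) : ℤ) - ((p : ℤ) * ((a + n : ℕ) : ℤ) + (j (a + n) : ℤ)))
      = q ^ (p - 2) * (q ^ ((p - 2) * (p - 1)) - 1) /
          (q ^ ((p - 1) * a) * (q ^ (p - 2) - 1) * (q ^ ((p - 1) ^ 2) - 1)) := by
  have hp2 : 2 ≤ p := hp.two_le
  have hp3 : 3 ≤ p := by omega
  set m := p - 1 with hm
  have hm2 : 2 ≤ m := by omega
  haveI : NeZero m := ⟨by omega⟩
  have hq0 : (0:ℝ) < q := by linarith
  -- determine j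
  have hjval : ∀ n : ℕ, (j (a + n) : ℤ) = (m : ℤ) - (n % m : ℕ) := by
    intro n
    obtain ⟨h1, h2, hd⟩ := hj (a + n)
    have hmZ : ((p : ℤ) - 1) = (m : ℤ) := by omega
    rw [hmZ] at hd
    have hd1 : (m : ℤ) ∣ ((j (a + n) : ℤ) + n) := by
      have h' : ((j (a + n) : ℤ) - ((a : ℤ) - ((a + n : ℕ) : ℤ))) = (j (a + n) : ℤ) + n := by
        push_cast; ring
      rwa [h'] at hd
    have hd2 : (m : ℤ) ∣ ((j (a + n) : ℤ) + (n % m : ℕ)) := by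
      have hn : (n : ℤ) = (m : ℤ) * (n / m : ℕ) + (n % m : ℕ) := by
        exact_mod_cast (Nat.div_add_mod n m).symm
      have h4 : ((j (a + n) : ℤ) + (n % m : ℕ))
          = ((j (a + n) : ℤ) + n) - (m : ℤ) * (n / m : ℕ) := by rw [hn]; ring
      rw [h4]
      exact dvd_sub hd1 (dvd_mul_right _ _)
    obtain ⟨t, ht⟩ := hd2
    have hrlt : n % m < m := Nat.mod_lt _ (by omega)
    have hjle : j (a + n) ≤ m := h2
    have ht1 : t = 1 := by
      rcases lt_trichotomy t 1 with h | h | h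
      · exfalso
        have htn : t ≤ 0 := by omega
        have hmt : (m : ℤ) * t ≤ 0 :=
          mul_nonpos_of_nonneg_of_nonpos (by positivity) htn
        have hJ1 : (1 : ℤ) ≤ (j (a + n) : ℤ) := by exact_mod_cast h1
        have hr0 : (0 : ℤ) ≤ ((n % m : ℕ) : ℤ) := by positivity
        linarith [ht]
      · exact h
      · exfalso
        have h2t : (2 : ℤ) ≤ t := by omega
        have hmt : (m : ℤ) * 2 ≤ (m : ℤ) * t :=
          mul_le_mul_of_nonneg_left h2t (by positivity)
        have hJm : (j (a + n) : ℤ) ≤ (m : ℤ) := by exact_mod_cast hjle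
        have hrm : ((n % m : ℕ) : ℤ) ≤ (m : ℤ) - 1 := by omega
        linarith [ht]
    rw [ht1, mul_one] at ht
    omega
  -- rewrite the summand
  have hsummand : ∀ n : ℕ,
      q ^ (((a + n : ℕ) : ℤ) - ((p : ℤ) * ((a + n : ℕ) : ℤ) + (j (a + n) : ℤ)))
        = (q ^ (m * a + m))⁻¹ *
            ((q ^ (m ^ 2))⁻¹ ^ (n / m) * (q ^ (m - 1))⁻¹ ^ (n % m)) := by
    intro n
    have hexp : (((a + n : ℕ) : ℤ) - ((p : ℤ) * ((a + n : ℕ) : ℤ) + (j (a + n) : ℤ)))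
        = (-(m * a + m : ℕ) : ℤ) +
            ((-(m ^ 2 : ℕ) : ℤ) * ((n / m : ℕ) : ℤ) +
              (-(m - 1 : ℕ) : ℤ) * ((n % m : ℕ) : ℤ)) := by
      rw [hjval n]
      set k := n / m with hk
      set r := n % m with hr
      have hn : (n : ℤ) = (m : ℤ) * k + r := by
        rw [hk, hr]; exact_mod_cast (Nat.div_add_mod n m).symm
      have hp' : (p : ℤ) = (m : ℤ) + 1 := by omega
      have hm1 : ((m - 1 : ℕ) : ℤ) = (m : ℤ) - 1 := by omega
      have hma : ((m * a + m : ℕ) : ℤ) = (m : ℤ) * a + m := by push_cast; ring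
      have hmsq : ((m ^ 2 : ℕ) : ℤ) = (m : ℤ) ^ 2 := by push_cast; ring
      rw [hp', hm1, hma, hmsq]
      push_cast
      rw [hn]
      ring
    rw [hexp]
    rw [zpow_add₀ (ne_of_gt hq0), zpow_add₀ (ne_of_gt hq0), zpow_mul, zpow_mul]
    simp only [zpow_neg, zpow_natCast]
  rw [tsum_congr hsummand]
  -- rewrite the goal's exponents in terms of m
  rw [show p - 2 = m - 1 by omega]
  -- constants
  set A : ℝ := q ^ (m - 1) with hA
  set X : ℝ := q ^ (m * a) with hX
  set Y : ℝ := A ^ m with hY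
  have hA1 : 1 < A := one_lt_pow₀ hq (by omega)
  have hY1 : 1 < Y := one_lt_pow₀ hA1 (by omega)
  have hX0 : 0 < X := by positivity
  have hqm : q ^ m = A * q := by
    rw [hA, ← pow_succ]
    congr 1
    omega
  have hYq : q ^ ((m - 1) * m) = Y := by rw [hY, hA, ← pow_mul]
  have hmam : q ^ (m * a + m) = X * (A * q) := by rw [pow_add, hqm, hX]
  have hmsqq : q ^ (m ^ 2) = Y * (A * q) := by
    rw [← hqm, ← hYq, ← pow_add]
    congr 1
    have h1 : 1 ≤ m := by omega
    nlinarith [Nat.sub_add_cancel h1]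
  have hu0 : (0:ℝ) ≤ (q ^ (m ^ 2))⁻¹ := by positivity
  have hu1 : (q ^ (m ^ 2))⁻¹ < 1 := by
    apply inv_lt_one_of_one_lt₀
    exact one_lt_pow₀ hq (by positivity)
  have hv1 : (q ^ (m - 1))⁻¹ ≠ 1 := by
    rw [← hA]
    intro h
    have hA0 : A ≠ 0 := by positivity
    have : A = 1 := by
      field_simp at h
      linarith
    linarith
  -- transport along divMod equivalence and compute
  have key : (∑' n : ℕ, (q ^ (m * a + m))⁻¹ *
        ((q ^ (m ^ 2))⁻¹ ^ (n / m) * (q ^ (m - 1))⁻¹ ^ (n % m)))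
      = (q ^ (m * a + m))⁻¹ *
          ((1 - (q ^ (m ^ 2))⁻¹)⁻¹ * ∑ r ∈ Finset.range m, (q ^ (m - 1))⁻¹ ^ r) := by
    rw [← Equiv.tsum_eq (Nat.divModEquiv m).symm]
    have hfun : ∀ x : ℕ × Fin m,
        (q ^ (m * a + m))⁻¹ *
            ((q ^ (m ^ 2))⁻¹ ^ ((Nat.divModEquiv m).symm x / m) *
              (q ^ (m - 1))⁻¹ ^ ((Nat.divModEquiv m).symm x % m))
          = ((q ^ (m * a + m))⁻¹ * (q ^ (m ^ 2))⁻¹ ^ x.1) *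
              (q ^ (m - 1))⁻¹ ^ (x.2 : ℕ) := by
      intro x
      have hx : (Nat.divModEquiv m).symm x = x.1 * m + (x.2 : ℕ) := rfl
      have hdiv : (x.1 * m + (x.2 : ℕ)) / m = x.1 := by
        rw [mul_comm, Nat.mul_add_div (by omega), Nat.div_eq_of_lt x.2.isLt, add_zero]
      have hmod : (x.1 * m + (x.2 : ℕ)) % m = (x.2 : ℕ) := by
        rw [mul_comm, Nat.mul_add_mod, Nat.mod_eq_of_lt x.2.isLt]
      rw [hx, hdiv, hmod]
      ring
    rw [tsum_congr hfun]
    have hs1 : Summable (fun k : ℕ => (q ^ (m * a + m))⁻¹ * (q ^ (m ^ 2))⁻¹ ^ k) :=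
      (summable_geometric_of_lt_one hu0 hu1).mul_left _
    have hs2 : Summable (fun r : Fin m => (q ^ (m - 1))⁻¹ ^ (r : ℕ)) :=
      Summable.of_finite
    have hsummable : Summable (fun x : ℕ × Fin m =>
        ((q ^ (m * a + m))⁻¹ * (q ^ (m ^ 2))⁻¹ ^ x.1) * (q ^ (m - 1))⁻¹ ^ (x.2 : ℕ)) :=
      hs1.mul_of_nonneg hs2 (fun k => by positivity) (fun r => by positivity)
    rw [Summable.tsum_prod' hsummable (fun k => Summable.of_finite)]
    simp only [tsum_fintype, ← Finset.mul_sum]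
    rw [tsum_mul_right, tsum_mul_left, tsum_geometric_of_lt_one hu0 hu1,
      Fin.sum_univ_eq_sum_range]
    ring
  rw [key, geom_sum_eq hv1 m, hmam, hmsqq, hYq, ← hA]
  have hvm : ((q ^ (m - 1))⁻¹) ^ m = Y⁻¹ := by
    rw [← hA, inv_pow, ← hY]
  rw [hvm]
  exact stmt_19_aux q X A Y hq hX0 hA1 hY1
end
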